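/- Fix an integer s ≥ 1, γ_{00}, γ_{10} ∈ [0,1], assume δ_{11} > 0, δ_{10} > 0 and δ_{00} > 0, let Y̲^B ∈ ℝ satisfy Y̲^B ≤ Y^B_i for all units i, let x ≥ Y̲^B, and let μ and ν be Borel probability measures on ℝ with μ((−∞, Y̲^B)) = 0 and ν((−∞, Y̲^B)) = 0 such that, for all u ∈ ℝ, F_B(u | 0,0) = (1 − γ_{00})·F_B(u | 1,1) + γ_{00}·μ((−∞, u]) and F_B(u | 1,0) = (1 − γ_{10})·F_B(u | 1,1) + γ_{10}·ν((−∞, u]). Then E_B[g_{s,x} | 1,1]·(δ_{11} + (1 − γ_{00})·δ_{00} + (1 − γ_{10})·δ_{10}) ≤ D^s_B(x) ≤ E_B[g_{s,x} | 1,1]·(δ_{11} + (1 − γ_{00})·δ_{00} + (1 − γ_{10})·δ_{10}) + ((x − Y̲^B)^{s−1}/(s−1)!)·(γ_{00}·δ_{00} + γ_{10}·δ_{10}). (Population B part of Proposition D.4: identification bounds under the Kline–Santos mixture decomposition for unit and wave nonresponse.) -/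

import Mathlib

open Finset

noncomputable section

/-- Fraction of units in the response class `(a, b)`. -/
def delta {N : ℕ} (ZA ZB : Fin N → Bool) (a b : Bool) : ℝ :=
  ((univ.filter (fun i => ZA i = a ∧ ZB i = b)).card : ℝ) / N

/-- Conditional mean of `g ∘ Y` given the response class `(a, b)`. -/
def condMean {N : ℕ} (Y : Fin N → ℝ) (ZA ZB : Fin N → Bool) (a b : Bool) (g : ℝ → ℝ) : ℝ :=
  (∑ i ∈ univ.filter (fun i => ZA i = a ∧ ZB i = b), g (Y i)) / ((N : ℝ) * delta ZA ZB a b)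

/-- Conditional CDF of `Y` given the response class `(a, b)`. -/
def condCDF' {N : ℕ} (Y : Fin N → ℝ) (ZA ZB : Fin N → Bool) (a b : Bool) (x : ℝ) : ℝ :=
  ((univ.filter (fun i => Y i ≤ x ∧ ZA i = a ∧ ZB i = b)).card : ℝ) / ((N : ℝ) * delta ZA ZB a b)

/-- Population CDF of `Y`. -/
def popCDF {N : ℕ} (Y : Fin N → ℝ) (x : ℝ) : ℝ :=
  ((univ.filter (fun i => Y i ≤ x)).card : ℝ) / N

/-- `s`-th order dominance function of the population `Y`. -/
def domFn {N : ℕ} (Y : Fin N → ℝ) (s : ℕ) (x : ℝ) : ℝ :=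
  (∑ i ∈ univ.filter (fun i => Y i ≤ x), (x - Y i) ^ (s - 1) / ((s - 1).factorial : ℝ)) / N

/-- `g_{s,x}(y) = ((x-y)^{s-1}/(s-1)!) 1[y ≤ x]`. -/
def gfun (s : ℕ) (x : ℝ) : ℝ → ℝ :=
  fun y => ((x - y) ^ (s - 1) / ((s - 1).factorial : ℝ)) * (if y ≤ x then 1 else 0)

/-!
Since no unit has `Z^A = 0, Z^B = 1`, `D^s_B(x) = ∑ δ_{ab} E_B[g_{s,x} | a,b]` over the three
remaining classes. A finite measure on `ℝ` is determined by its values on the rays `(-∞, u]`, so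
the mixture identities of the conditional CDFs lift to the conditional laws and give
`E_B[g | 0,0] = (1 - γ₀₀) E_B[g | 1,1] + γ₀₀ ∫ g dμ`, and likewise for the class `(1,0)`
with `ν`.
As `μ` and `ν` live on `[Y̲^B, ∞)`, where `0 ≤ g_{s,x} ≤ (x - Y̲^B)^{s-1}/(s-1)!`, both
integrals lie between `0` and that constant.
-/

open MeasureTheory Set

section gfun

variable (s : ℕ) (x : ℝ)

lemma measurable_gfun : Measurable (gfun s x) :=
  (((measurable_const.sub measurable_id).pow_const _).div_const _).mul
    (Measurable.ite measurableSet_Iic measurable_const measurable_const)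

lemma gfun_nonneg (y : ℝ) : 0 ≤ gfun s x y := by
  unfold gfun
  split_ifs with h
  · have : 0 ≤ x - y := sub_nonneg.2 h
    positivity
  · simp

variable {s x}

lemma gfun_le {a y : ℝ} (hax : a ≤ x) (hay : a ≤ y) :
    gfun s x y ≤ (x - a) ^ (s - 1) / ((s - 1).factorial : ℝ) := by
  unfold gfun
  split_ifs with h
  · rw [mul_one]
    gcongr
  · rw [mul_zero]
    have : 0 ≤ x - a := by linarith
    positivity

variable {a : ℝ} {μ : Measure ℝ}

lemma ae_le_of_measure_Iio_eq_zero (hμ : μ (Iio a) = 0) : ∀ᵐ y ∂μ, a ≤ y :=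
  ae_iff.2 (by simp_rw [not_le]; exact hμ)

lemma integrable_gfun [IsFiniteMeasure μ] (hax : a ≤ x) (hμ : μ (Iio a) = 0) :
    Integrable (gfun s x) μ :=
  (integrable_const ((x - a) ^ (s - 1) / ((s - 1).factorial : ℝ))).mono'
    (measurable_gfun s x).aestronglyMeasurable <| by
      filter_upwards [ae_le_of_measure_Iio_eq_zero hμ] with y hy
      rw [Real.norm_of_nonneg (gfun_nonneg s x y)]
      exact gfun_le hax hy

lemma integral_gfun_mem_Icc [IsProbabilityMeasure μ] (hax : a ≤ x) (hμ : μ (Iio a) = 0) :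
    ∫ y, gfun s x y ∂μ ∈ Icc 0 ((x - a) ^ (s - 1) / ((s - 1).factorial : ℝ)) := by
  refine ⟨integral_nonneg (gfun_nonneg s x), ?_⟩
  calc ∫ y, gfun s x y ∂μ
      ≤ ∫ _, (x - a) ^ (s - 1) / ((s - 1).factorial : ℝ) ∂μ :=
        integral_mono_ae (integrable_gfun hax hμ) (integrable_const _) <| by
          filter_upwards [ae_le_of_measure_Iio_eq_zero hμ] with y hy
          exact gfun_le hax hy
    _ = (x - a) ^ (s - 1) / ((s - 1).factorial : ℝ) := by simp

end gfun

lemma MeasureTheory.Measure.eq_smul_add_smul_of_toReal_Iic {μ ρ κ : Measure ℝ}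
    [IsFiniteMeasure μ] [IsFiniteMeasure ρ] [IsFiniteMeasure κ] {γ : ℝ}
    (hγ : γ ∈ Icc (0 : ℝ) 1)
    (h : ∀ u, (μ (Iic u)).toReal = (1 - γ) * (ρ (Iic u)).toReal + γ * (κ (Iic u)).toReal) :
    μ = ENNReal.ofReal (1 - γ) • ρ + ENNReal.ofReal γ • κ := by
  refine Measure.ext_of_Iic _ _ fun u => ?_
  have h1γ : 0 ≤ 1 - γ := sub_nonneg.2 hγ.2
  rw [← ENNReal.ofReal_toReal (measure_ne_top μ _), h u,
    ENNReal.ofReal_add (mul_nonneg h1γ ENNReal.toReal_nonneg)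
      (mul_nonneg hγ.1 ENNReal.toReal_nonneg),
    ENNReal.ofReal_mul h1γ, ENNReal.ofReal_mul hγ.1,
    ENNReal.ofReal_toReal (measure_ne_top ρ _), ENNReal.ofReal_toReal (measure_ne_top κ _)]
  rfl

section condLaw

variable {N : ℕ} (Y : Fin N → ℝ) (ZA ZB : Fin N → Bool) (a b : Bool)

-- Normalised by `N * delta` as in `condMean`, so that its integrals are the conditional means
-- even for an empty class.
def condLaw : Measure ℝ :=
  ENNReal.ofReal ((N : ℝ) * delta ZA ZB a b)⁻¹ •
    ∑ i ∈ univ.filter (fun i => ZA i = a ∧ ZB i = b), Measure.dirac (Y i)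

instance : IsFiniteMeasure (condLaw Y ZA ZB a b) where
  measure_univ_lt_top := by
    rw [condLaw, Measure.smul_apply, Measure.finsetSum_apply, smul_eq_mul]
    exact ENNReal.mul_lt_top ENNReal.ofReal_lt_top
      (ENNReal.sum_lt_top.2 fun _ _ => measure_lt_top _ _)

lemma condLaw_Iic_toReal (u : ℝ) :
    (condLaw Y ZA ZB a b (Iic u)).toReal = condCDF' Y ZA ZB a b u := by
  have hfilter : (univ.filter (fun i => ZA i = a ∧ ZB i = b)).filter (fun i => Y i ∈ Iic u)
      = univ.filter (fun i => Y i ≤ u ∧ ZA i = a ∧ ZB i = b) := by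
    ext i
    simp only [mem_filter, Set.mem_Iic]
    tauto
  rw [condLaw, Measure.smul_apply, Measure.finsetSum_apply, smul_eq_mul]
  simp only [Measure.dirac_apply' _ measurableSet_Iic, indicator, Pi.one_apply]
  rw [← sum_filter, hfilter, sum_const, nsmul_one, ENNReal.toReal_mul,
    ENNReal.toReal_ofReal (by unfold delta; positivity), ENNReal.toReal_natCast, condCDF',
    div_eq_inv_mul]

lemma integrable_condLaw (g : ℝ → ℝ) : Integrable g (condLaw Y ZA ZB a b) :=
  (integrable_finsetSum_measure.2 fun _ _ => integrable_dirac enorm_lt_top).smul_measure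
    ENNReal.ofReal_ne_top

lemma integral_condLaw (g : ℝ → ℝ) :
    ∫ y, g y ∂condLaw Y ZA ZB a b = condMean Y ZA ZB a b g := by
  rw [condLaw, integral_smul_measure,
    integral_finsetSum_measure fun _ _ => integrable_dirac enorm_lt_top,
    ENNReal.toReal_ofReal (by unfold delta; positivity), condMean, div_eq_inv_mul, smul_eq_mul]
  simp only [integral_dirac]

end condLaw

section classes

variable {N : ℕ} (Y : Fin N → ℝ) (ZA ZB : Fin N → Bool)

lemma delta_nonneg (a b : Bool) : 0 ≤ delta ZA ZB a b := by
  unfold delta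
  positivity

lemma condMean_eq_mixture {a b a' b' : Bool} {γ : ℝ} (hγ : γ ∈ Icc (0 : ℝ) 1)
    {κ : Measure ℝ} [IsFiniteMeasure κ] {g : ℝ → ℝ} (hg : Integrable g κ)
    (hmix : ∀ u, condCDF' Y ZA ZB a b u =
      (1 - γ) * condCDF' Y ZA ZB a' b' u + γ * (κ (Iic u)).toReal) :
    condMean Y ZA ZB a b g = (1 - γ) * condMean Y ZA ZB a' b' g + γ * ∫ y, g y ∂κ := by
  have hlaw : condLaw Y ZA ZB a b
      = ENNReal.ofReal (1 - γ) • condLaw Y ZA ZB a' b' + ENNReal.ofReal γ • κ :=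
    Measure.eq_smul_add_smul_of_toReal_Iic hγ fun u => by
      simp only [condLaw_Iic_toReal, hmix]
  rw [← integral_condLaw, hlaw,
    integral_add_measure ((integrable_condLaw ..).smul_measure ENNReal.ofReal_ne_top)
      (hg.smul_measure ENNReal.ofReal_ne_top),
    integral_smul_measure, integral_smul_measure, integral_condLaw,
    ENNReal.toReal_ofReal (sub_nonneg.2 hγ.2), ENNReal.toReal_ofReal hγ.1,
    smul_eq_mul, smul_eq_mul]

-- No positivity of `delta` is needed: if it vanishes, the class is empty or `N = 0`.
lemma delta_mul_condMean (a b : Bool) (g : ℝ → ℝ) :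
    delta ZA ZB a b * condMean Y ZA ZB a b g
      = (∑ i ∈ univ.filter (fun i => ZA i = a ∧ ZB i = b), g (Y i)) / N := by
  by_cases hδ : delta ZA ZB a b = 0
  · obtain hcard | hN := div_eq_zero_iff.1 hδ
    · rw [Nat.cast_eq_zero, card_eq_zero] at hcard
      simp [hδ, hcard]
    · simp [hδ, hN]
  · have hN : (N : ℝ) ≠ 0 := fun hN => hδ (by simp [delta, hN])
    rw [condMean]
    field_simp

lemma sum_eq_sum_classes (hno : ∀ i, ¬(ZA i = false ∧ ZB i = true)) (f : Fin N → ℝ) :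
    ∑ i, f i = ∑ i ∈ univ.filter (fun i => ZA i = true ∧ ZB i = true), f i
      + ∑ i ∈ univ.filter (fun i => ZA i = true ∧ ZB i = false), f i
      + ∑ i ∈ univ.filter (fun i => ZA i = false ∧ ZB i = false), f i := by
  simp only [sum_filter, ← sum_add_distrib]
  refine sum_congr rfl fun i _ => ?_
  have := hno i
  cases hA : ZA i <;> cases hB : ZB i <;> simp_all

lemma domFn_eq_sum_delta_mul_condMean (hno : ∀ i, ¬(ZA i = false ∧ ZB i = true)) (s : ℕ)
    (x : ℝ) :
    domFn Y s x = delta ZA ZB true true * condMean Y ZA ZB true true (gfun s x)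
      + delta ZA ZB true false * condMean Y ZA ZB true false (gfun s x)
      + delta ZA ZB false false * condMean Y ZA ZB false false (gfun s x) := by
  rw [delta_mul_condMean, delta_mul_condMean, delta_mul_condMean, ← add_div, ← add_div,
    ← sum_eq_sum_classes ZA ZB hno, domFn, sum_filter]
  congr 1
  refine sum_congr rfl fun i _ => ?_
  simp [gfun]

end classes

theorem kline_santos_bounds_B_general {N : ℕ}
    (YB : Fin N → ℝ) (ZA ZB : Fin N → Bool)
    (hno : ∀ i, ¬(ZA i = false ∧ ZB i = true))
    (s : ℕ)
    (γ00 γ10 : ℝ) (hγ00 : γ00 ∈ Set.Icc (0 : ℝ) 1) (hγ10 : γ10 ∈ Set.Icc (0 : ℝ) 1)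
    (YlB : ℝ)
    (x : ℝ) (hx : YlB ≤ x)
    (μ ν : Measure ℝ) [IsProbabilityMeasure μ] [IsProbabilityMeasure ν]
    (hsuppμ : μ (Set.Iio YlB) = 0) (hsuppν : ν (Set.Iio YlB) = 0)
    (hmix00 : ∀ u : ℝ, condCDF' YB ZA ZB false false u =
      (1 - γ00) * condCDF' YB ZA ZB true true u + γ00 * (μ (Set.Iic u)).toReal)
    (hmix10 : ∀ u : ℝ, condCDF' YB ZA ZB true false u =
      (1 - γ10) * condCDF' YB ZA ZB true true u + γ10 * (ν (Set.Iic u)).toReal) :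
    condMean YB ZA ZB true true (gfun s x)
        * (delta ZA ZB true true + (1 - γ00) * delta ZA ZB false false
            + (1 - γ10) * delta ZA ZB true false)
      ≤ domFn YB s x ∧
    domFn YB s x ≤
      condMean YB ZA ZB true true (gfun s x)
        * (delta ZA ZB true true + (1 - γ00) * delta ZA ZB false false
            + (1 - γ10) * delta ZA ZB true false)
      + ((x - YlB) ^ (s - 1) / ((s - 1).factorial : ℝ))
          * (γ00 * delta ZA ZB false false + γ10 * delta ZA ZB true false) := by
  obtain ⟨hIμ0, hIμC⟩ := integral_gfun_mem_Icc (s := s) hx hsuppμ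
  obtain ⟨hIν0, hIνC⟩ := integral_gfun_mem_Icc (s := s) hx hsuppν
  have hw00 : 0 ≤ γ00 * delta ZA ZB false false := mul_nonneg hγ00.1 (delta_nonneg ..)
  have hw10 : 0 ≤ γ10 * delta ZA ZB true false := mul_nonneg hγ10.1 (delta_nonneg ..)
  rw [domFn_eq_sum_delta_mul_condMean YB ZA ZB hno,
    condMean_eq_mixture YB ZA ZB hγ00 (integrable_gfun hx hsuppμ) hmix00,
    condMean_eq_mixture YB ZA ZB hγ10 (integrable_gfun hx hsuppν) hmix10]
  constructor
  · linarith [mul_nonneg hw00 hIμ0, mul_nonneg hw10 hIν0]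
  · linarith [mul_le_mul_of_nonneg_left hIμC hw00, mul_le_mul_of_nonneg_left hIνC hw10]

/-- Population B part of Proposition D.4: identification bounds under the
Kline–Santos mixture decomposition for unit and wave nonresponse. -/
theorem kline_santos_bounds_B {N : ℕ} (hN : 1 ≤ N)
    (YA YB : Fin N → ℝ) (ZA ZB : Fin N → Bool)
    (hno : ∀ i, ¬(ZA i = false ∧ ZB i = true))
    (s : ℕ) (hs : 1 ≤ s)
    (γ00 γ10 : ℝ) (hγ00 : γ00 ∈ Set.Icc (0 : ℝ) 1) (hγ10 : γ10 ∈ Set.Icc (0 : ℝ) 1)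
    (h11 : 0 < delta ZA ZB true true) (h10 : 0 < delta ZA ZB true false)
    (h00 : 0 < delta ZA ZB false false)
    (YlB : ℝ) (hYB : ∀ i, YlB ≤ YB i)
    (x : ℝ) (hx : YlB ≤ x)
    (μ ν : Measure ℝ) [IsProbabilityMeasure μ] [IsProbabilityMeasure ν]
    (hsuppμ : μ (Set.Iio YlB) = 0) (hsuppν : ν (Set.Iio YlB) = 0)
    (hmix00 : ∀ u : ℝ, condCDF' YB ZA ZB false false u =
      (1 - γ00) * condCDF' YB ZA ZB true true u + γ00 * (μ (Set.Iic u)).toReal)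
    (hmix10 : ∀ u : ℝ, condCDF' YB ZA ZB true false u =
      (1 - γ10) * condCDF' YB ZA ZB true true u + γ10 * (ν (Set.Iic u)).toReal) :
    condMean YB ZA ZB true true (gfun s x)
        * (delta ZA ZB true true + (1 - γ00) * delta ZA ZB false false
            + (1 - γ10) * delta ZA ZB true false)
      ≤ domFn YB s x ∧
    domFn YB s x ≤
      condMean YB ZA ZB true true (gfun s x)
        * (delta ZA ZB true true + (1 - γ00) * delta ZA ZB false false
            + (1 - γ10) * delta ZA ZB true false)
      + ((x - YlB) ^ (s - 1) / ((s - 1).factorial : ℝ))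
          * (γ00 * delta ZA ZB false false + γ10 * delta ZA ZB true false) :=
  kline_santos_bounds_B_general YB ZA ZB hno s γ00 γ10 hγ00 hγ10 YlB x hx μ ν hsuppμ hsuppν hmix00
    hmix10
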